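/- Model existence (propositional cases): Let Θ be an open saturated branch of an HPL tableau and let 𝔐^Θ be the induced product model built on urfathers. If φ is a propositional variable, the negation of a propositional variable, a nominal, the negation of a nominal, a conjunction, or a negated conjunction, and @ᵢ@ₐφ ∈ Θ, then 𝔐^Θ, (u_Θ(i), u_Θ(a)) ⊨ φ, assuming the claim holds for all quasi-subformulas of smaller complexity. -/
import Mathlib


/-- Formulas of two-dimensional hybrid (product) logic. -/
inductive Form (P N1 N2 : Type) : Type
  | prop : P → Form P N1 N2
  | nom1 : N1 → Form P N1 N2
  | nom2 : N2 → Form P N1 N2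
  | neg  : Form P N1 N2 → Form P N1 N2
  | and  : Form P N1 N2 → Form P N1 N2 → Form P N1 N2
  | dia1 : Form P N1 N2 → Form P N1 N2
  | dia2 : Form P N1 N2 → Form P N1 N2
  | at1  : N1 → Form P N1 N2 → Form P N1 N2
  | at2  : N2 → Form P N1 N2 → Form P N1 N2

/-- A product Kripke model: two Kripke frames plus a valuation interpreting
propositional variables as sets of pairs and nominals as named points. -/
structure ProductModel (P N1 N2 W1 W2 : Type) : Type where
  R1 : W1 → W1 → Prop
  R2 : W2 → W2 → Prop
  V  : P → W1 × W2 → Prop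
  v1 : N1 → W1
  v2 : N2 → W2

variable {P N1 N2 W1 W2 : Type}

/-- Horizontal accessibility. -/
def ProductModel.Rh (M : ProductModel P N1 N2 W1 W2) (w w' : W1 × W2) : Prop :=
  M.R1 w.1 w'.1 ∧ w.2 = w'.2

/-- Vertical accessibility. -/
def ProductModel.Rv (M : ProductModel P N1 N2 W1 W2) (w w' : W1 × W2) : Prop :=
  w.1 = w'.1 ∧ M.R2 w.2 w'.2

/-- Satisfaction in a product model. -/
def ProductModel.sat (M : ProductModel P N1 N2 W1 W2) : W1 × W2 → Form P N1 N2 → Prop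
  | w, .prop p  => M.V p w
  | w, .nom1 i  => w.1 = M.v1 i
  | w, .nom2 a  => w.2 = M.v2 a
  | w, .neg φ   => ¬ M.sat w φ
  | w, .and φ ψ => M.sat w φ ∧ M.sat w ψ
  | w, .dia1 φ  => ∃ w', M.Rh w w' ∧ M.sat w' φ
  | w, .dia2 φ  => ∃ w', M.Rv w w' ∧ M.sat w' φ
  | w, .at1 i φ => M.sat (M.v1 i, w.2) φ
  | w, .at2 a φ => M.sat (w.1, M.v2 a) φ

open Classical in
/-- The urfather of a nominal `s` with respect to the "@" relation `At`
(`At i j` means that `@ᵢj` occurs in the branch). -/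
noncomputable def urf (At : ℕ → ℕ → Prop) (s : ℕ) : ℕ :=
  if h : ∃ j, At s j then sInf {k | At h.choose k} else s

/-- Hybrid formulas with everything indexed by natural numbers. -/
abbrev F := Form ℕ ℕ ℕ

/-- `@ᵢj ∈ Θ` for first-sort nominals. -/
def At1 (Θ : Set F) (i j : ℕ) : Prop := Form.at1 i (Form.nom1 j) ∈ Θ

/-- `@ₐb ∈ Θ` for second-sort nominals. -/
def At2 (Θ : Set F) (a b : ℕ) : Prop := Form.at2 a (Form.nom2 b) ∈ Θ

/-- Urfather of a first-sort nominal on the branch `Θ`. -/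
noncomputable def urf1 (Θ : Set F) : ℕ → ℕ := urf (At1 Θ)

/-- Urfather of a second-sort nominal on the branch `Θ`. -/
noncomputable def urf2 (Θ : Set F) : ℕ → ℕ := urf (At2 Θ)

/-- Saturation of a branch `Θ` of an HPL tableau (Definition 5.4 of the
paper): `Θ` is closed under all the tableau rules. -/
structure Saturated (Θ : Set F) : Prop where
  negneg : ∀ i a φ, Form.at1 i (Form.at2 a (Form.neg (Form.neg φ))) ∈ Θ →
    Form.at1 i (Form.at2 a φ) ∈ Θ
  and_ : ∀ i a φ ψ, Form.at1 i (Form.at2 a (Form.and φ ψ)) ∈ Θ →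
    Form.at1 i (Form.at2 a φ) ∈ Θ ∧ Form.at1 i (Form.at2 a ψ) ∈ Θ
  negAnd : ∀ i a φ ψ, Form.at1 i (Form.at2 a (Form.neg (Form.and φ ψ))) ∈ Θ →
    Form.at1 i (Form.at2 a (Form.neg φ)) ∈ Θ ∨ Form.at1 i (Form.at2 a (Form.neg ψ)) ∈ Θ
  dia1 : ∀ i a φ, Form.at1 i (Form.at2 a (Form.dia1 φ)) ∈ Θ →
    ∃ j, Form.at1 i (Form.dia1 (Form.nom1 j)) ∈ Θ ∧ Form.at1 j (Form.at2 a φ) ∈ Θ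
  dia2 : ∀ i a φ, Form.at1 i (Form.at2 a (Form.dia2 φ)) ∈ Θ →
    ∃ b, Form.at2 a (Form.dia2 (Form.nom2 b)) ∈ Θ ∧ Form.at1 i (Form.at2 b φ) ∈ Θ
  negDia1 : ∀ i a j φ, Form.at1 i (Form.at2 a (Form.neg (Form.dia1 φ))) ∈ Θ →
    Form.at1 i (Form.dia1 (Form.nom1 j)) ∈ Θ → Form.at1 j (Form.at2 a (Form.neg φ)) ∈ Θ
  negDia2 : ∀ i a b φ, Form.at1 i (Form.at2 a (Form.neg (Form.dia2 φ))) ∈ Θ →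
    Form.at2 a (Form.dia2 (Form.nom2 b)) ∈ Θ → Form.at1 i (Form.at2 b (Form.neg φ)) ∈ Θ
  at1_ : ∀ i a j φ, Form.at1 i (Form.at2 a (Form.at1 j φ)) ∈ Θ →
    Form.at1 j (Form.at2 a φ) ∈ Θ
  at2_ : ∀ i a b φ, Form.at1 i (Form.at2 a (Form.at2 b φ)) ∈ Θ →
    Form.at1 i (Form.at2 b φ) ∈ Θ
  negAt1 : ∀ i a j φ, Form.at1 i (Form.at2 a (Form.neg (Form.at1 j φ))) ∈ Θ →
    Form.at1 j (Form.at2 a (Form.neg φ)) ∈ Θ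
  negAt2 : ∀ i a b φ, Form.at1 i (Form.at2 a (Form.neg (Form.at2 b φ))) ∈ Θ →
    Form.at1 i (Form.at2 b (Form.neg φ)) ∈ Θ
  red1a : ∀ i a k, Form.at1 i (Form.at2 a (Form.nom1 k)) ∈ Θ →
    Form.at1 i (Form.nom1 k) ∈ Θ
  red1b : ∀ i a k, Form.at1 i (Form.at2 a (Form.neg (Form.nom1 k))) ∈ Θ →
    Form.at1 i (Form.neg (Form.nom1 k)) ∈ Θ
  red2a : ∀ i a c, Form.at1 i (Form.at2 a (Form.nom2 c)) ∈ Θ →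
    Form.at2 a (Form.nom2 c) ∈ Θ
  red2b : ∀ i a c, Form.at1 i (Form.at2 a (Form.neg (Form.nom2 c))) ∈ Θ →
    Form.at2 a (Form.neg (Form.nom2 c)) ∈ Θ
  neg1 : ∀ i j, Form.at1 i (Form.neg (Form.nom1 j)) ∈ Θ →
    Form.at1 j (Form.nom1 j) ∈ Θ
  neg2 : ∀ a b, Form.at2 a (Form.neg (Form.nom2 b)) ∈ Θ →
    Form.at2 b (Form.nom2 b) ∈ Θ
  id1 : ∀ i a j φ, Form.at1 i (Form.at2 a φ) ∈ Θ → At1 Θ i j →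
    Form.at1 j (Form.at2 a φ) ∈ Θ
  id2 : ∀ i a b φ, Form.at1 i (Form.at2 a φ) ∈ Θ → At2 Θ a b →
    Form.at1 i (Form.at2 b φ) ∈ Θ
  id'1a : ∀ i k j, At1 Θ i k → At1 Θ i j → At1 Θ j k
  id'1b : ∀ i k j, Form.at1 i (Form.neg (Form.nom1 k)) ∈ Θ → At1 Θ i j →
    Form.at1 j (Form.neg (Form.nom1 k)) ∈ Θ
  id'2a : ∀ a c b, At2 Θ a c → At2 Θ a b → At2 Θ b c
  id'2b : ∀ a c b, Form.at2 a (Form.neg (Form.nom2 c)) ∈ Θ → At2 Θ a b →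
    Form.at2 b (Form.neg (Form.nom2 c)) ∈ Θ

/-- A branch is open if no prefix carries both a formula and its negation. -/
def OpenB (Θ : Set F) : Prop :=
  ¬ ((∃ i a φ, Form.at1 i (Form.at2 a φ) ∈ Θ ∧ Form.at1 i (Form.at2 a (Form.neg φ)) ∈ Θ) ∨
     (∃ i φ, Form.at1 i φ ∈ Θ ∧ Form.at1 i (Form.neg φ) ∈ Θ) ∨
     (∃ a φ, Form.at2 a φ ∈ Θ ∧ Form.at2 a (Form.neg φ) ∈ Θ))

/-- The product model `𝔐^Θ` induced by an open saturated branch `Θ`, built on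
urfathers: the accessibility relations, the valuation of propositional
variables and the interpretation of nominals are all read off from the
formulas `@ᵢ◇₁j`, `@ₐ◇₂b` and `@ᵢ@ₐp` occurring in `Θ`, with every nominal
interpreted by its urfather. -/
noncomputable def branchModel (Θ : Set F) : ProductModel ℕ ℕ ℕ ℕ ℕ where
  R1 := fun x x' => ∃ i j, Form.at1 i (Form.dia1 (Form.nom1 j)) ∈ Θ ∧
    x = urf1 Θ i ∧ x' = urf1 Θ j
  R2 := fun y y' => ∃ a b, Form.at2 a (Form.dia2 (Form.nom2 b)) ∈ Θ ∧
    y = urf2 Θ a ∧ y' = urf2 Θ b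
  V := fun p w => ∃ i a, Form.at1 i (Form.at2 a (Form.prop p)) ∈ Θ ∧
    w = (urf1 Θ i, urf2 Θ a)
  v1 := urf1 Θ
  v2 := urf2 Θ

/-- Complexity of a formula. -/
def Form.size {P N1 N2 : Type} : Form P N1 N2 → ℕ
  | .prop _   => 1
  | .nom1 _   => 1
  | .nom2 _   => 1
  | .neg φ    => φ.size + 1
  | .and φ ψ  => φ.size + ψ.size + 1
  | .dia1 φ   => φ.size + 1
  | .dia2 φ   => φ.size + 1
  | .at1 _ φ  => φ.size + 1
  | .at2 _ φ  => φ.size + 1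

section UrfLemmas

variable {At : ℕ → ℕ → Prop}

lemma urf_move (eucl : ∀ i k j, At i k → At i j → At j k) {i : ℕ}
    (hE : ∃ j, At i j) : At hE.choose (urf At i) ∧ At i hE.choose := by
  have hc : At i hE.choose := hE.choose_spec
  have hcc : At hE.choose hE.choose := eucl i hE.choose hE.choose hc hc
  have hne : {k | At hE.choose k}.Nonempty := ⟨_, hcc⟩
  have hval : urf At i = sInf {k | At hE.choose k} := by
    unfold urf; rw [dif_pos hE]
  refine ⟨?_, hc⟩
  rw [hval]
  exact Nat.sInf_mem hne

lemma urf_congr (eucl : ∀ i k j, At i k → At i j → At j k) {i j : ℕ}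
    (hij : At i j) : urf At i = urf At j := by
  have hEi : ∃ k, At i k := ⟨j, hij⟩
  have hjj : At j j := eucl i j j hij hij
  have hEj : ∃ k, At j k := ⟨j, hjj⟩
  have hci : At i hEi.choose := hEi.choose_spec
  have hcj : At j hEj.choose := hEj.choose_spec
  have hjci : At j hEi.choose := eucl i hEi.choose j hci hij
  have h1 : At hEj.choose hEi.choose := eucl j hEi.choose hEj.choose hjci hcj
  have h2 : At hEi.choose hEj.choose := eucl j hEj.choose hEi.choose hcj hjci
  unfold urf
  rw [dif_pos hEi, dif_pos hEj]
  congr 1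
  ext k
  exact ⟨fun hk => eucl hEi.choose k hEj.choose hk h2,
         fun hk => eucl hEj.choose k hEi.choose hk h1⟩

lemma urf_reach (eucl : ∀ i k j, At i k → At i j → At j k) {s : ℕ}
    (hss : At s s) : At s (urf At s) := by
  have hE : ∃ j, At s j := ⟨s, hss⟩
  obtain ⟨h1, h2⟩ := urf_move eucl hE
  have hcs : At hE.choose s := eucl s s hE.choose hss h2
  exact eucl hE.choose (urf At s) s h1 hcs

end UrfLemmas

lemma move1 {Θ : Set F} (hsat : Saturated Θ) {i a : ℕ} {φ : F}
    (h : Form.at1 i (Form.at2 a φ) ∈ Θ) :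
    Form.at1 (urf1 Θ i) (Form.at2 a φ) ∈ Θ := by
  by_cases hE : ∃ j, At1 Θ i j
  · obtain ⟨h1, h2⟩ := urf_move hsat.id'1a hE
    exact hsat.id1 _ _ _ _ (hsat.id1 _ _ _ _ h h2) h1
  · show Form.at1 (urf (At1 Θ) i) _ ∈ Θ
    unfold urf; rw [dif_neg hE]; exact h

lemma move2 {Θ : Set F} (hsat : Saturated Θ) {i a : ℕ} {φ : F}
    (h : Form.at1 i (Form.at2 a φ) ∈ Θ) :
    Form.at1 i (Form.at2 (urf2 Θ a) φ) ∈ Θ := by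
  by_cases hE : ∃ b, At2 Θ a b
  · obtain ⟨h1, h2⟩ := urf_move hsat.id'2a hE
    exact hsat.id2 _ _ _ _ (hsat.id2 _ _ _ _ h h2) h1
  · show Form.at1 i (Form.at2 (urf (At2 Θ) a) φ) ∈ Θ
    unfold urf; rw [dif_neg hE]; exact h

lemma moveNeg1 {Θ : Set F} (hsat : Saturated Θ) {i n : ℕ}
    (h : Form.at1 i (Form.neg (Form.nom1 n)) ∈ Θ) :
    Form.at1 (urf1 Θ i) (Form.neg (Form.nom1 n)) ∈ Θ := by
  by_cases hE : ∃ j, At1 Θ i j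
  · obtain ⟨h1, h2⟩ := urf_move hsat.id'1a hE
    exact hsat.id'1b _ _ _ (hsat.id'1b _ _ _ h h2) h1
  · show Form.at1 (urf (At1 Θ) i) _ ∈ Θ
    unfold urf; rw [dif_neg hE]; exact h

lemma moveNeg2 {Θ : Set F} (hsat : Saturated Θ) {a n : ℕ}
    (h : Form.at2 a (Form.neg (Form.nom2 n)) ∈ Θ) :
    Form.at2 (urf2 Θ a) (Form.neg (Form.nom2 n)) ∈ Θ := by
  by_cases hE : ∃ b, At2 Θ a b
  · obtain ⟨h1, h2⟩ := urf_move hsat.id'2a hE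
    exact hsat.id'2b _ _ _ (hsat.id'2b _ _ _ h h2) h1
  · show Form.at2 (urf (At2 Θ) a) _ ∈ Θ
    unfold urf; rw [dif_neg hE]; exact h

/-- model existence, propositional cases: let `Θ` be an open
saturated branch of an HPL tableau and `𝔐^Θ` the induced urfather model.
If `φ` is a propositional variable, a negated propositional variable, a
nominal, a negated nominal, a conjunction or a negated conjunction, and
`@ᵢ@ₐφ ∈ Θ`, then `𝔐^Θ, (u_Θ(i), u_Θ(a)) ⊨ φ` — assuming (induction
hypothesis) that the claim holds for all formulas of smaller complexity. -/
theorem model_existence_propositional (Θ : Set F)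
    (hsat : Saturated Θ) (hopen : OpenB Θ) (φ : F) (i a : ℕ)
    (IH : ∀ (ψ : F) (j b : ℕ), ψ.size < φ.size →
      Form.at1 j (Form.at2 b ψ) ∈ Θ →
      (branchModel Θ).sat (urf1 Θ j, urf2 Θ b) ψ)
    (hshape :
      (∃ p, φ = Form.prop p) ∨
      (∃ p, φ = Form.neg (Form.prop p)) ∨
      (∃ n, φ = Form.nom1 n ∨ φ = Form.nom2 n) ∨
      (∃ n, φ = Form.neg (Form.nom1 n) ∨ φ = Form.neg (Form.nom2 n)) ∨
      (∃ ψ₁ ψ₂, φ = Form.and ψ₁ ψ₂ ∨ φ = Form.neg (Form.and ψ₁ ψ₂)))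
    (h : Form.at1 i (Form.at2 a φ) ∈ Θ) :
    (branchModel Θ).sat (urf1 Θ i, urf2 Θ a) φ := by
  rcases hshape with ⟨p, rfl⟩ | ⟨p, rfl⟩ | ⟨n, rfl | rfl⟩ | ⟨n, rfl | rfl⟩ |
    ⟨ψ₁, ψ₂, rfl | rfl⟩
  · -- prop
    exact ⟨i, a, h, rfl⟩
  · -- neg prop
    rintro ⟨i', a', hp, heq⟩
    have h1 : urf1 Θ i = urf1 Θ i' := congrArg Prod.fst heq
    have h2 : urf2 Θ a = urf2 Θ a' := congrArg Prod.snd heq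
    have hP : Form.at1 (urf1 Θ i') (Form.at2 (urf2 Θ a') (Form.prop p)) ∈ Θ :=
      move2 hsat (move1 hsat hp)
    have hN : Form.at1 (urf1 Θ i) (Form.at2 (urf2 Θ a) (Form.neg (Form.prop p))) ∈ Θ :=
      move2 hsat (move1 hsat h)
    rw [h1, h2] at hN
    exact hopen (Or.inl ⟨_, _, _, hP, hN⟩)
  · -- nom1
    exact urf_congr hsat.id'1a (hsat.red1a i a n h)
  · -- nom2
    exact urf_congr hsat.id'2a (hsat.red2a i a n h)
  · -- neg nom1
    intro heq
    have hneg : Form.at1 i (Form.neg (Form.nom1 n)) ∈ Θ := hsat.red1b i a n h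
    have hnn : At1 Θ n n := hsat.neg1 i n hneg
    have hN : Form.at1 (urf1 Θ i) (Form.neg (Form.nom1 n)) ∈ Θ := moveNeg1 hsat hneg
    have hreach : At1 Θ n (urf1 Θ n) := urf_reach hsat.id'1a hnn
    rw [show (urf1 Θ n = urf1 Θ i) from heq.symm] at hreach
    have hP : At1 Θ (urf1 Θ i) n := hsat.id'1a n n (urf1 Θ i) hnn hreach
    exact hopen (Or.inr (Or.inl ⟨urf1 Θ i, Form.nom1 n, hP, hN⟩))
  · -- neg nom2
    intro heq
    have hneg : Form.at2 a (Form.neg (Form.nom2 n)) ∈ Θ := hsat.red2b i a n h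
    have hnn : At2 Θ n n := hsat.neg2 a n hneg
    have hN : Form.at2 (urf2 Θ a) (Form.neg (Form.nom2 n)) ∈ Θ := moveNeg2 hsat hneg
    have hreach : At2 Θ n (urf2 Θ n) := urf_reach hsat.id'2a hnn
    rw [show (urf2 Θ n = urf2 Θ a) from heq.symm] at hreach
    have hP : At2 Θ (urf2 Θ a) n := hsat.id'2a n n (urf2 Θ a) hnn hreach
    exact hopen (Or.inr (Or.inr ⟨urf2 Θ a, Form.nom2 n, hP, hN⟩))
  · -- and
    obtain ⟨h1, h2⟩ := hsat.and_ i a ψ₁ ψ₂ h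
    exact ⟨IH ψ₁ i a (by simp [Form.size]) h1,
           IH ψ₂ i a (by simp [Form.size]) h2⟩
  · -- neg and
    rintro ⟨hs1, hs2⟩
    rcases hsat.negAnd i a ψ₁ ψ₂ h with hn | hn
    · exact IH (Form.neg ψ₁) i a (by simp [Form.size]) hn hs1
    · exact IH (Form.neg ψ₂) i a (by simp [Form.size]) hn hs2
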